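/- arXiv:2203.12018 — 7 statements merged into one kernel-verified Lean document; each statement's English description precedes it below -/
import Mathlib

section
/- Let F₁, F₂ : F_2^n → F_2^n be functions and α, β ∈ F_2^n. Define f : F_2 × F_2^n → F_2^n by f(0,x) = F₂(x ⊕ F₁(α)) ⊕ (α ⊕ β) and f(1,x) = F₂(x ⊕ F₁(β)) ⊕ (α ⊕ β). Then f(b ⊕ 1, x ⊕ F₁(α) ⊕ F₁(β)) = f(b,x) for all b ∈ F_2, x ∈ F_2^n. -/
/-!
Both branches of `f` are translates of the same function `g = F₂ · + (α + β)`, namely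
`x ↦ g (x + F₁ α)` and `x ↦ g (x + F₁ β)`. In characteristic two, shifting `x` by `F₁ α + F₁ β`
turns one translation offset into the other, so it exchanges the two branches.
-/

theorem ZModModule.add_add_add_cancel_right {G : Type*} [AddCommGroup G] [Module (ZMod 2) G]
    (x a b : G) : x + a + b + a = x + b := by
  rw [add_right_comm, add_assoc x, ZModModule.add_self, add_zero]

theorem ZModModule.add_add_add_self_right {G : Type*} [AddCommGroup G] [Module (ZMod 2) G]
    (x a b : G) : x + a + b + b = x + a := by
  rw [add_assoc, ZModModule.add_self, add_zero]

theorem apply_add_one_add_add_of_branches {G X : Type*} [AddCommGroup G] [Module (ZMod 2) G]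
    (f : ZMod 2 × G → X) (g : G → X) (a b : G)
    (hf0 : ∀ x, f (0, x) = g (x + a)) (hf1 : ∀ x, f (1, x) = g (x + b))
    (c : ZMod 2) (x : G) : f (c + 1, x + a + b) = f (c, x) := by
  obtain rfl | rfl : c = 0 ∨ c = 1 := by revert c; decide
  · rw [zero_add, hf1, hf0, ZModModule.add_add_add_self_right]
  · rw [show (1 + 1 : ZMod 2) = 0 from rfl, hf0, hf1, ZModModule.add_add_add_cancel_right]

theorem stmt_4 {n : ℕ} (F₁ F₂ : (Fin n → ZMod 2) → (Fin n → ZMod 2))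
    (α β : Fin n → ZMod 2)
    (f : ZMod 2 × (Fin n → ZMod 2) → (Fin n → ZMod 2))
    (hf0 : ∀ x, f (0, x) = F₂ (x + F₁ α) + (α + β))
    (hf1 : ∀ x, f (1, x) = F₂ (x + F₁ β) + (α + β)) :
    ∀ (b : ZMod 2) (x : Fin n → ZMod 2), f (b + 1, x + F₁ α + F₁ β) = f (b, x) :=
  apply_add_one_add_add_of_branches f (fun y ↦ F₂ y + (α + β)) (F₁ α) (F₁ β) hf0 hf1
end

section
/- Let p_c, p_d, p_e : F_2^b → F_2^b be functions, r₀, r₁, k' ∈ F_2^b, and define z(m) = p_e(p_d(p_c(m ⊕ r₀) ⊕ p_c(m ⊕ r₁))) ⊕ k'. Then z(m ⊕ r₀ ⊕ r₁) = z(m) for all m ∈ F_2^b. -/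
/-! Over `𝔽₂` every element is its own negative, so translating `m` by `r₀ + r₁` swaps the two
inputs `m + r₀` and `m + r₁` of `p_c`; their sum, and hence everything computed from it, is unchanged. -/

namespace ZModModule

variable {G H : Type*} [AddCommGroup G] [Module (ZMod 2) G]

lemma add_add_add_right_cancel (m a b : G) : m + a + b + a = m + b := by
  rw [add_right_comm (m + a), add_assoc m a, add_self, add_zero]

lemma periodic_apply_add_add_apply_add [AddCommMagma H] (f : G → H) (r₀ r₁ : G) :
    Function.Periodic (fun m ↦ f (m + r₀) + f (m + r₁)) (r₀ + r₁) := by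
  intro m
  dsimp only
  rw [← add_assoc, add_add_add_right_cancel, add_assoc (m + r₀), add_self, add_zero, add_comm]

end ZModModule

theorem stmt_5 {b : ℕ} (p_c p_d p_e : (Fin b → ZMod 2) → (Fin b → ZMod 2))
    (r₀ r₁ k' : Fin b → ZMod 2)
    (z : (Fin b → ZMod 2) → (Fin b → ZMod 2))
    (hz : ∀ m, z m = p_e (p_d (p_c (m + r₀) + p_c (m + r₁))) + k') :
    ∀ m, z (m + r₀ + r₁) = z m := by
  have hper : Function.Periodic z (r₀ + r₁) := by
    rw [funext hz]
    exact (ZModModule.periodic_apply_add_add_apply_add p_c r₀ r₁).comp (fun x ↦ p_e (p_d x) + k')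
  intro m
  rw [add_assoc]
  exact hper m
end

section
/- Let p_c, p_d, p_e : F_2^b → F_2^b, let α, β, r₀, r₁, k' ∈ F_2^b, and define z(m) = p_e(p_d(p_c(m ⊕ α ⊕ r₀) ⊕ p_c(m ⊕ β ⊕ r₁))) ⊕ k'. Then z(m ⊕ α ⊕ β ⊕ r₀ ⊕ r₁) = z(m) for all m ∈ F_2^b. -/
/-! Over `F₂` the translations `m ↦ m + u` and `m ↦ m + v` are exchanged by translating by
`u + v`, so the two branches `p_c (m + α + r₀)` and `p_c (m + β + r₁)` merely swap places under
`m ↦ m + α + r₀ + β + r₁`, and their sum does not change. -/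

theorem periodic_map_add_add_map_add {G H : Type*} [AddCommGroup G] [Module (ZMod 2) G]
    [AddCommMagma H] (p : G → H) (u v : G) :
    Function.Periodic (fun m ↦ p (m + u) + p (m + v)) (u + v) := by
  intro m
  have hu : m + (u + v) + u = m + v := by
    rw [add_comm u v, ← add_assoc, add_assoc _ u u, ZModModule.add_self, add_zero]
  have hv : m + (u + v) + v = m + u := by
    rw [← add_assoc, add_assoc _ v v, ZModModule.add_self, add_zero]
  dsimp only
  rw [hu, hv, add_comm]

theorem stmt_6 {b : ℕ} (p_c p_d p_e : (Fin b → ZMod 2) → (Fin b → ZMod 2))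
    (α β r₀ r₁ k' : Fin b → ZMod 2)
    (z : (Fin b → ZMod 2) → (Fin b → ZMod 2))
    (hz : ∀ m, z m = p_e (p_d (p_c (m + α + r₀) + p_c (m + β + r₁))) + k') :
    ∀ m, z (m + α + β + r₀ + r₁) = z m := by
  have hperiodic := (periodic_map_add_add_map_add p_c (α + r₀) (β + r₁)).comp
    fun x ↦ p_e (p_d x) + k'
  intro m
  rw [hz, hz]
  simpa only [Function.comp_apply, ← add_assoc, add_right_comm _ r₀ β] using hperiodic m
end

section
/- Let p_c, p_d, p_e : F_2^b → F_2^b, let r₀, r₁, r₂, r₃, α₀, α₁, k' ∈ F_2^b, and define Y₀(m₀) = p_c(m₀ ⊕ α₀ ⊕ r₀) ⊕ p_c(m₀ ⊕ α₀ ⊕ r₁), Y₁(m₁) = p_c(m₁ ⊕ α₁ ⊕ r₂) ⊕ p_c(m₁ ⊕ α₁ ⊕ r₃), and z(m₀,m₁) = p_e(p_d(Y₀(m₀) ⊕ Y₁(m₁))) ⊕ k'. Then z(m₀ ⊕ r₀ ⊕ r₁, m₁) = z(m₀, m₁) and z(m₀, m₁ ⊕ r₂ ⊕ r₃) = z(m₀,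 m₁) for all m₀, m₁ ∈ F_2^b. -/
/-! Over `𝔽₂`, translating `m` by `r + s` swaps the two summands of
`p (m + a + r) + p (m + a + s)`, so each `Yᵢ`, and hence `z` in that variable, is periodic. -/

theorem ZModModule.periodic_add_translates {G H : Type*} [AddCommGroup G] [Module (ZMod 2) G]
    [AddCommMagma H] (p : G → H) (a r s : G) :
    Function.Periodic (fun m ↦ p (m + a + r) + p (m + a + s)) (r + s) := by
  intro m
  have shift_r : m + (r + s) + a + r = m + a + s := by
    rw [show m + (r + s) + a + r = m + a + s + (r + r) by abel, add_self, add_zero]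
  have shift_s : m + (r + s) + a + s = m + a + r := by
    rw [show m + (r + s) + a + s = m + a + r + (s + s) by abel, add_self, add_zero]
  simp only [shift_r, shift_s]
  exact add_comm _ _

theorem stmt_8 {b : ℕ} (p_c p_d p_e : (Fin b → ZMod 2) → (Fin b → ZMod 2))
    (r₀ r₁ r₂ r₃ α₀ α₁ k' : Fin b → ZMod 2)
    (Y₀ Y₁ : (Fin b → ZMod 2) → (Fin b → ZMod 2))
    (z : (Fin b → ZMod 2) → (Fin b → ZMod 2) → (Fin b → ZMod 2))
    (hY₀ : ∀ m₀, Y₀ m₀ = p_c (m₀ + α₀ + r₀) + p_c (m₀ + α₀ + r₁))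
    (hY₁ : ∀ m₁, Y₁ m₁ = p_c (m₁ + α₁ + r₂) + p_c (m₁ + α₁ + r₃))
    (hz : ∀ m₀ m₁, z m₀ m₁ = p_e (p_d (Y₀ m₀ + Y₁ m₁)) + k') :
    ∀ m₀ m₁, z (m₀ + r₀ + r₁) m₁ = z m₀ m₁ ∧ z m₀ (m₁ + r₂ + r₃) = z m₀ m₁ := by
  have hY₀_periodic : Function.Periodic Y₀ (r₀ + r₁) := by
    rw [funext hY₀]
    exact ZModModule.periodic_add_translates p_c α₀ r₀ r₁
  have hY₁_periodic : Function.Periodic Y₁ (r₂ + r₃) := by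
    rw [funext hY₁]
    exact ZModModule.periodic_add_translates p_c α₁ r₂ r₃
  intro m₀ m₁
  exact ⟨by rw [hz, hz, add_assoc m₀, hY₀_periodic], by rw [hz, hz, add_assoc m₁, hY₁_periodic]⟩
end

section
/- Let F : F_2^n → F_2^m and k, σ ∈ F_2^n with s(x) := F(x ⊕ k) ⊕ F(x ⊕ σ ⊕ k) ⊕ C for a constant C ∈ F_2^m. Define Δ(x) = s(x) ⊕ F(x) ⊕ F(x ⊕ σ). Then Δ(x ⊕ k) = Δ(x), Δ(x ⊕ σ) = Δ(x), and Δ(x ⊕ k ⊕ σ) = Δ(x) for all x ∈ F_2^n. -/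
/-!
Writing `g x = F x + F (x + k)`, we have `Δ x = g x + g (x + σ) + C`: up to the constant `C`, `Δ x`
is the sum of `F` over the coset `x + {0, k, σ, k + σ}`, and this coset does not change when `x` is
translated by an element of the subgroup `{0, k, σ, k + σ}`.
-/

open Function

theorem periodic_add_comp_add_of_add_self_eq_zero {G M : Type*} [AddMonoid G] [AddCommMagma M]
    (f : G → M) {c : G} (hc : c + c = 0) : Periodic (fun x => f x + f (x + c)) c := fun x => by
  simp only [add_assoc, hc, add_zero, add_comm (f (x + c))]

theorem stmt_10 {n m : ℕ} (F : (Fin n → ZMod 2) → (Fin m → ZMod 2))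
    (k σ : Fin n → ZMod 2) (C : Fin m → ZMod 2)
    (s Δ : (Fin n → ZMod 2) → (Fin m → ZMod 2))
    (hs : ∀ x, s x = F (x + k) + F (x + σ + k) + C)
    (hΔ : ∀ x, Δ x = s x + F x + F (x + σ)) :
    ∀ x, Δ (x + k) = Δ x ∧ Δ (x + σ) = Δ x ∧ Δ (x + k + σ) = Δ x := by
  have hself : ∀ a : Fin n → ZMod 2, a + a = 0 := fun a => funext fun i => CharTwo.add_self_eq_zero (a i)
  set g := fun x => F x + F (x + k)
  have hΔg : Δ = fun x => g x + g (x + σ) + C := funext fun x => by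
    simp only [hΔ, hs, g]
    abel
  have hg : Periodic g k := periodic_add_comp_add_of_add_self_eq_zero F (hself k)
  have hk : Periodic Δ k := hΔg ▸ (hg.add (hg.add_const σ)).add fun _ => rfl
  have hσ : Periodic Δ σ :=
    hΔg ▸ (periodic_add_comp_add_of_add_self_eq_zero g (hself σ)).add fun _ => rfl
  exact fun x => ⟨hk x, hσ x, (hσ (x + k)).trans (hk x)⟩
end

section
/- Let H, G : list of bits → F_2^m be arbitrary keyed functions and define a 4-round Feistel with F₁(x) = H(x‖0), F₂(x) = G(x‖W‖1), F₃(x) = G(x‖W‖0). For fixed α, let f(m) = F₁(α) ⊕ F₃(α ⊕ F₂(X(m) ⊕ F₁(α))) where X(m) = m‖m and F₁(α) = β₁‖β₂. If the map m ↦ F₂((m ⊕ β₁)‖(m ⊕ β₂)) has period s (i.e. is invariant under m ↦ m ⊕ s), then f(m ⊕ s) = f(m) for all m ∈ F_2^b. -/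
theorem stmt_15 {b : ℕ}
    (F₁ F₂ F₃ : ((Fin b → ZMod 2) × (Fin b → ZMod 2)) →
      ((Fin b → ZMod 2) × (Fin b → ZMod 2)))
    (α : (Fin b → ZMod 2) × (Fin b → ZMod 2))
    (β₁ β₂ : Fin b → ZMod 2) (hβ : F₁ α = (β₁, β₂))
    (f : (Fin b → ZMod 2) → ((Fin b → ZMod 2) × (Fin b → ZMod 2)))
    (hf : ∀ m, f m = F₁ α + F₃ (α + F₂ ((m, m) + F₁ α)))
    (s : Fin b → ZMod 2)
    (hper : ∀ m, F₂ (m + s + β₁, m + s + β₂) = F₂ (m + β₁, m + β₂)) :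
    ∀ m, f (m + s) = f m := by
  have hinner : Function.Periodic (fun m ↦ F₂ (m + β₁, m + β₂)) s := hper
  have hf' : f = fun m ↦ (β₁, β₂) + F₃ (α + F₂ (m + β₁, m + β₂)) := by
    funext m
    rw [hf, hβ]
    rfl
  rw [hf']
  exact hinner.comp fun y ↦ (β₁, β₂) + F₃ (α + y)
end

section
/- Let g : F_2^n → F_2 be a Boolean function with deg(g) ≤ d < n, and let S_d = {y ∈ F_2^n : wt(y) ≤ d}. Then for every x ∈ F_2^n, g(x) = ⊕_{y ≤ x, y ∈ S_d} g(y) · (∑_{i=0}^{d − wt(y)} C(wt(x) − wt(y), i) mod 2), where y ≤ x means y_i ≤ x_i coordinatewise and C denotes the binomial coefficient. In particular, g is uniquely determined by its values on S_d. -/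
/-! Identify `F₂ⁿ` with the subsets of `Fin n` through supports. Then `anf g` is the zeta transform
`t ↦ ∑_{r ⊆ t} g r`, which is an involution in characteristic 2 because each `r ⊊ s` lies below
`2 ^ (|s| - |r|)` subsets of `s`. Hence `g x = ∑_{u ⊆ x, |u| ≤ d} anf g u`; expanding `anf g u` and
swapping the sums, `g y` is counted once for each `u` with `y ⊆ u ⊆ x` and `|u| ≤ d`, and there are
`∑_{i ≤ d - |y|} C(|x| - |y|, i)` of them. -/

/-- Hamming weight of a vector in `F_2^n`. -/
def hwt {n : ℕ} (u : Fin n → ZMod 2) : ℕ :=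
  (Finset.univ.filter fun i => u i = 1).card

/-- ANF (Möbius) coefficient of a Boolean function at the monomial index `u`. -/
def anf {n : ℕ} (g : (Fin n → ZMod 2) → ZMod 2) (u : Fin n → ZMod 2) : ZMod 2 :=
  ∑ x ∈ Finset.univ.filter (fun x : Fin n → ZMod 2 => ∀ i, x i = 1 → u i = 1), g x

open Finset

namespace Finset

theorem card_filter_powerset_card_le {α : Type*} (B : Finset α) (m : ℕ) :
    #{u ∈ B.powerset | #u ≤ m} = ∑ i ∈ range (m + 1), (#B).choose i := by
  rw [card_eq_sum_card_fiberwise (f := card) (t := range (m + 1))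
    (fun u hu => mem_range_succ_iff.2 (mem_filter.1 hu).2)]
  refine sum_congr rfl fun i hi => ?_
  rw [← card_powersetCard, powersetCard_eq_filter, filter_filter]
  exact congrArg card <| filter_congr fun u _ =>
    ⟨And.right, fun hu => ⟨hu ▸ mem_range_succ_iff.1 hi, hu⟩⟩

theorem card_filter_Icc_card_le {α : Type*} [DecidableEq α] {r s : Finset α} (hrs : r ⊆ s)
    {d : ℕ} (hr : #r ≤ d) :
    #{t ∈ Icc r s | #t ≤ d} = ∑ i ∈ range (d - #r + 1), (#s - #r).choose i := by
  have hdisj : ∀ u ∈ (s \ r).powerset, Disjoint r u := fun u hu =>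
    disjoint_of_subset_right (mem_powerset.1 hu) disjoint_sdiff
  rw [Icc_eq_image_powerset hrs, filter_image, card_image_of_injOn, ← card_sdiff_of_subset hrs,
    ← card_filter_powerset_card_le]
  · refine congrArg card (filter_congr fun u hu => ?_)
    rw [card_union_of_disjoint (hdisj u hu)]
    omega
  · intro u hu v hv huv
    rw [← union_sdiff_cancel_left (hdisj u (mem_filter.1 hu).1),
      ← union_sdiff_cancel_left (hdisj v (mem_filter.1 hv).1)]
    exact congrArg (· \ r) huv

end Finset

section ZetaTransform

variable {α : Type*} [DecidableEq α]

def zetaTransform {M : Type*} [AddCommMonoid M] (f : Finset α → M) (t : Finset α) : M :=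
  ∑ r ∈ t.powerset, f r

theorem sum_filter_zetaTransform {M : Type*} [AddCommMonoid M] (P : Finset α → Prop)
    [DecidablePred P] (hP : ∀ r t, r ⊆ t → P t → P r) (f : Finset α → M) (s : Finset α) :
    ∑ t ∈ s.powerset with P t, zetaTransform f t =
      ∑ r ∈ s.powerset with P r, #{t ∈ Icc r s | P t} • f r := by
  unfold zetaTransform
  rw [sum_comm' (t' := {r ∈ s.powerset | P r}) (s' := fun r => {t ∈ Icc r s | P t})]
  · simp only [sum_const]
  · intro t r
    simp only [mem_filter, mem_powerset, mem_Icc]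
    constructor
    · rintro ⟨⟨hts, ht⟩, hrt⟩
      exact ⟨⟨⟨hrt, hts⟩, ht⟩, hrt.trans hts, hP r t hrt ht⟩
    · rintro ⟨⟨⟨hrt, hts⟩, ht⟩, -⟩
      exact ⟨⟨hts, ht⟩, hrt⟩

variable {R : Type*} [Ring R] [CharP R 2]

theorem zetaTransform_zetaTransform (f : Finset α → R) : zetaTransform (zetaTransform f) = f := by
  funext s
  have h := sum_filter_zetaTransform (fun _ => True) (fun _ _ _ _ => trivial) f s
  simp only [filter_true_of_mem fun _ _ => trivial] at h
  rw [zetaTransform, h, sum_eq_single_of_mem s (mem_powerset_self s)]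
  · simp
  · intro r hr hrs
    have hlt : #r < #s := card_lt_card (ssubset_of_subset_of_ne (mem_powerset.1 hr) hrs)
    rw [card_Icc_finset (mem_powerset.1 hr), nsmul_eq_mul, Nat.cast_pow, Nat.cast_ofNat,
      CharTwo.two_eq_zero, zero_pow (by omega), zero_mul]

theorem eq_sum_card_le_of_zetaTransform_eq_zero (f : Finset α → R) (d : ℕ)
    (hdeg : ∀ t, zetaTransform f t ≠ 0 → #t ≤ d) (s : Finset α) :
    f s = ∑ r ∈ s.powerset with #r ≤ d,
      f r * ((∑ i ∈ range (d - #r + 1), (#s - #r).choose i : ℕ) : R) := by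
  calc f s = ∑ t ∈ s.powerset, zetaTransform f t := by
        rw [← zetaTransform, zetaTransform_zetaTransform]
    _ = ∑ t ∈ s.powerset with #t ≤ d, zetaTransform f t :=
        (sum_filter_of_ne fun t _ ht => hdeg t ht).symm
    _ = ∑ r ∈ s.powerset with #r ≤ d, #{t ∈ Icc r s | #t ≤ d} • f r :=
        sum_filter_zetaTransform _ (fun r t hrt ht => (card_le_card hrt).trans ht) f s
    _ = _ := by
        refine sum_congr rfl fun r hr => ?_
        rw [mem_filter, mem_powerset] at hr
        rw [card_filter_Icc_card_le hr.1 hr.2, nsmul_eq_mul']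

end ZetaTransform

namespace BooleanFunction

variable {n : ℕ}

def supp (u : Fin n → ZMod 2) : Finset (Fin n) := {i | u i = 1}

theorem hwt_eq_card_supp (u : Fin n → ZMod 2) : hwt u = #(supp u) := rfl

theorem supp_subset_supp_iff {x y : Fin n → ZMod 2} :
    supp y ⊆ supp x ↔ ∀ i, y i = 1 → x i = 1 := by
  simp [supp, subset_iff]

def suppEquiv : (Fin n → ZMod 2) ≃ Finset (Fin n) where
  toFun := supp
  invFun s i := if i ∈ s then 1 else 0
  left_inv u := funext fun i => by
    rcases (by decide : ∀ a : ZMod 2, a = 0 ∨ a = 1) (u i) with h | h <;> simp [supp, h]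
  right_inv s := by ext; simp [supp]

@[simp] theorem suppEquiv_apply (u : Fin n → ZMod 2) : suppEquiv u = supp u := rfl

@[simp] theorem supp_suppEquiv_symm (s : Finset (Fin n)) : supp (suppEquiv.symm s) = s :=
  suppEquiv.apply_symm_apply s

@[simp] theorem suppEquiv_symm_supp (u : Fin n → ZMod 2) : suppEquiv.symm (supp u) = u :=
  suppEquiv.symm_apply_apply u

theorem anf_eq_zetaTransform (g : (Fin n → ZMod 2) → ZMod 2) (u : Fin n → ZMod 2) :
    anf g u = zetaTransform (g ∘ suppEquiv.symm) (supp u) :=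
  sum_equiv suppEquiv (by simp [supp_subset_supp_iff]) (by simp)

theorem eq_sum_hwt_le_of_anf_eq_zero (g : (Fin n → ZMod 2) → ZMod 2) (d : ℕ)
    (hdeg : ∀ u, anf g u ≠ 0 → hwt u ≤ d) (x : Fin n → ZMod 2) :
    g x = ∑ y ∈ univ.filter fun y : Fin n → ZMod 2 => (∀ i, y i = 1 → x i = 1) ∧ hwt y ≤ d,
      g y * ((∑ i ∈ range (d - hwt y + 1), (hwt x - hwt y).choose i : ℕ) : ZMod 2) := by
  have hdeg' : ∀ t, zetaTransform (g ∘ suppEquiv.symm) t ≠ 0 → #t ≤ d := fun t ht => by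
    simpa [anf_eq_zetaTransform, hwt_eq_card_supp] using
      hdeg (suppEquiv.symm t) (by simpa [anf_eq_zetaTransform] using ht)
  calc g x = (g ∘ suppEquiv.symm) (supp x) := by simp
    _ = _ := eq_sum_card_le_of_zetaTransform_eq_zero _ d hdeg' (supp x)
    _ = _ := by
        refine (sum_equiv suppEquiv (fun y => ?_) (by simp [hwt_eq_card_supp])).symm
        -- unfold the filters before `simp` rewrites `hwt` inside their decidability instances
        rw [mem_filter, mem_filter]
        simp [supp_subset_supp_iff, hwt_eq_card_supp]

end BooleanFunction

open BooleanFunction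

theorem stmt_17_general {n : ℕ} (g : (Fin n → ZMod 2) → ZMod 2) (d : ℕ)
    (hdeg : ∀ u, anf g u ≠ 0 → hwt u ≤ d) :
    (∀ x : Fin n → ZMod 2,
      g x = ∑ y ∈ Finset.univ.filter
          (fun y : Fin n → ZMod 2 => (∀ i, y i = 1 → x i = 1) ∧ hwt y ≤ d),
        g y * ((∑ i ∈ Finset.range (d - hwt y + 1),
          Nat.choose (hwt x - hwt y) i : ℕ) : ZMod 2)) ∧
      (∀ g₁ g₂ : (Fin n → ZMod 2) → ZMod 2,
        (∀ u, anf g₁ u ≠ 0 → hwt u ≤ d) → (∀ u, anf g₂ u ≠ 0 → hwt u ≤ d) →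
        (∀ y, hwt y ≤ d → g₁ y = g₂ y) → g₁ = g₂) := by
  refine ⟨eq_sum_hwt_le_of_anf_eq_zero g d hdeg, fun g₁ g₂ h₁ h₂ hagree => funext fun x => ?_⟩
  rw [eq_sum_hwt_le_of_anf_eq_zero g₁ d h₁ x, eq_sum_hwt_le_of_anf_eq_zero g₂ d h₂ x]
  exact sum_congr rfl fun y hy => by rw [hagree y (mem_filter.1 hy).2.2]

theorem stmt_17 {n : ℕ} (g : (Fin n → ZMod 2) → ZMod 2) (d : ℕ) (hdn : d < n)
    (hdeg : ∀ u, anf g u ≠ 0 → hwt u ≤ d) :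
    (∀ x : Fin n → ZMod 2,
      g x = ∑ y ∈ Finset.univ.filter
          (fun y : Fin n → ZMod 2 => (∀ i, y i = 1 → x i = 1) ∧ hwt y ≤ d),
        g y * ((∑ i ∈ Finset.range (d - hwt y + 1),
          Nat.choose (hwt x - hwt y) i : ℕ) : ZMod 2)) ∧
      (∀ g₁ g₂ : (Fin n → ZMod 2) → ZMod 2,
        (∀ u, anf g₁ u ≠ 0 → hwt u ≤ d) → (∀ u, anf g₂ u ≠ 0 → hwt u ≤ d) →
        (∀ y, hwt y ≤ d → g₁ y = g₂ y) → g₁ = g₂) :=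
  stmt_17_general g d hdeg
end
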